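/- For every k ∈ ℝ^d, the vector ψ(k) with components ψ^{2j-1}(k) = (1+e^{ik_j})∏_{l≠j}(1+e^{-ik_l})(1+e^{ik_l}) and ψ^{2j}(k) = (1+e^{-ik_j})∏_{l≠j}(1+e^{-ik_l})(1+e^{ik_l}) satisfies Û_G(k) ψ(k) = ψ(k), where Û_G(k) is the Fourier-transformed Grover walk operator on ℤ^d. -/
import Mathlib

open Complex

noncomputable def pX {d : ℕ} (k : Fin d → ℝ) (j : Fin d) : ℂ :=
  Complex.exp (Complex.I * (k j : ℂ))

noncomputable def pY {d : ℕ} (k : Fin d → ℝ) (j : Fin d) : ℂ :=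
  Complex.exp (-(Complex.I * (k j : ℂ)))

noncomputable def pP {d : ℕ} (k : Fin d → ℝ) (j : Fin d) : ℂ :=
  ∏ l ∈ Finset.univ.filter (fun l : Fin d => l ≠ j), (1 + pY k l) * (1 + pX k l)

noncomputable def pQ {d : ℕ} (k : Fin d → ℝ) : ℂ :=
  ∏ l, (1 + pY k l) * (1 + pX k l)

lemma pXY {d : ℕ} (k : Fin d → ℝ) (j : Fin d) : pX k j * pY k j = 1 := by
  rw [pX, pY, ← Complex.exp_add]
  simp

lemma pQP {d : ℕ} (k : Fin d → ℝ) (j : Fin d) :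
    (1 + pY k j) * (1 + pX k j) * pP k j = pQ k := by
  rw [pP, pQ, Finset.filter_ne']
  exact Finset.mul_prod_erase Finset.univ (fun l => (1 + pY k l) * (1 + pX k l)) (Finset.mem_univ j)

lemma sum_range_two_mul (d : ℕ) (f : ℕ → ℂ) :
    ∑ i ∈ Finset.range (2*d), f i = ∑ j ∈ Finset.range d, (f (2*j) + f (2*j+1)) := by
  induction d with
  | zero => simp
  | succ n ih =>
    have h : 2*(n+1) = (2*n+1)+1 := by ring
    rw [h, Finset.sum_range_succ, Finset.sum_range_succ, ih, Finset.sum_range_succ]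
    ring

/-- For every `k ∈ ℝ^d`, the vector `ψ(k)` with components
`ψ^{2j-1}(k) = (1+X_j) ∏_{l ≠ j} (1+X_l⁻¹)(1+X_l)` and
`ψ^{2j}(k) = (1+X_j⁻¹) ∏_{l ≠ j} (1+X_l⁻¹)(1+X_l)` (where `X_j = e^{i k_j}`)
satisfies `Û_G(k) ψ(k) = ψ(k)` for the Fourier-transformed Grover walk on `ℤ^d`. -/
theorem groverWalk_fourier_eigenvector (d : ℕ) (hd : 1 ≤ d) (k : Fin d → ℝ)
    (G : Matrix (Fin (2 * d)) (Fin (2 * d)) ℂ)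
    (hG : ∀ i j, G i j = 1 / (d : ℂ) - (if i = j then 1 else 0))
    (S : Matrix (Fin (2 * d)) (Fin (2 * d)) ℂ)
    (hS : S = Matrix.diagonal (fun i =>
      if i.val % 2 = 0 then Complex.exp (Complex.I * (k ⟨i.val / 2, by omega⟩ : ℂ))
      else Complex.exp (-(Complex.I * (k ⟨i.val / 2, by omega⟩ : ℂ)))))
    (ψ : Fin (2 * d) → ℂ)
    (hψ : ∀ i : Fin (2 * d),
      ψ i = (if i.val % 2 = 0
              then 1 + Complex.exp (Complex.I * (k ⟨i.val / 2, by omega⟩ : ℂ))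
              else 1 + Complex.exp (-(Complex.I * (k ⟨i.val / 2, by omega⟩ : ℂ)))) *
        ∏ l ∈ Finset.univ.filter (fun l : Fin d => l ≠ ⟨i.val / 2, by omega⟩),
          (1 + Complex.exp (-(Complex.I * (k l : ℂ)))) *
            (1 + Complex.exp (Complex.I * (k l : ℂ)))) :
    (S * G).mulVec ψ = ψ := by
  have hd0 : (d : ℂ) ≠ 0 := Nat.cast_ne_zero.mpr (by omega)
  -- rewrite ψ in terms of pX, pY, pP
  have hψ' : ∀ i : Fin (2*d),
      ψ i = (if i.val % 2 = 0 then 1 + pX k ⟨i.val/2, by omega⟩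
             else 1 + pY k ⟨i.val/2, by omega⟩) * pP k ⟨i.val/2, by omega⟩ := by
    intro i
    rw [hψ i]
    rfl
  -- values at even/odd indices
  have heven : ∀ (j : Fin d) (h0 : 2*j.val < 2*d),
      ψ ⟨2*j.val, h0⟩ = (1 + pX k j) * pP k j := by
    intro j h0
    rw [hψ' ⟨2*j.val, h0⟩]
    have h1 : (2*j.val) % 2 = 0 := by omega
    have h2 : (2*j.val) / 2 = j.val := by omega
    simp only [h1, h2, if_pos]
  have hodd : ∀ (j : Fin d) (h0 : 2*j.val+1 < 2*d),
      ψ ⟨2*j.val+1, h0⟩ = (1 + pY k j) * pP k j := by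
    intro j h0
    rw [hψ' ⟨2*j.val+1, h0⟩]
    have h1 : (2*j.val+1) % 2 = 1 := by omega
    have h2 : (2*j.val+1) / 2 = j.val := by omega
    simp only [h1, h2]
    norm_num
  -- total sum
  have hSum : ∑ m, ψ m = (d : ℂ) * pQ k := by
    have hF : ∑ m : Fin (2*d), ψ m
        = ∑ n ∈ Finset.range (2*d), (fun n => if h : n < 2*d then ψ ⟨n, h⟩ else 0) n := by
      rw [← Fin.sum_univ_eq_sum_range]
      apply Finset.sum_congr rfl
      intro m _
      simp [m.isLt]
    rw [hF, sum_range_two_mul]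
    have : ∀ j ∈ Finset.range d,
        ((fun n => if h : n < 2*d then ψ ⟨n, h⟩ else 0) (2*j)
          + (fun n => if h : n < 2*d then ψ ⟨n, h⟩ else 0) (2*j+1)) = pQ k := by
      intro j hj
      have hjd : j < d := Finset.mem_range.mp hj
      have h0 : 2*j < 2*d := by omega
      have h1 : 2*j+1 < 2*d := by omega
      simp only [dif_pos h0, dif_pos h1]
      have e0 := heven ⟨j, hjd⟩ h0
      have e1 := hodd ⟨j, hjd⟩ h1
      rw [e0, e1, ← pQP k ⟨j, hjd⟩]
      have := pXY k ⟨j, hjd⟩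
      linear_combination (-(pP k ⟨j, hjd⟩)) * this
    rw [Finset.sum_congr rfl this]
    simp [mul_comm]
  -- row computation
  funext i
  have hrow : (S * G).mulVec ψ i
      = (if i.val % 2 = 0 then pX k ⟨i.val/2, by omega⟩ else pY k ⟨i.val/2, by omega⟩)
        * ((1/(d:ℂ)) * (∑ m, ψ m) - ψ i) := by
    rw [hS]
    simp only [Matrix.mulVec, dotProduct, Matrix.diagonal_mul]
    have : ∀ m : Fin (2*d), G i m * ψ m = (1/(d:ℂ)) * ψ m - (if i = m then ψ m else 0) := by
      intro m
      rw [hG i m]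
      by_cases h : i = m <;> simp [h] <;> ring
    calc ∑ m, (if i.val % 2 = 0 then Complex.exp (Complex.I * (k ⟨i.val / 2, by omega⟩ : ℂ))
          else Complex.exp (-(Complex.I * (k ⟨i.val / 2, by omega⟩ : ℂ)))) * G i m * ψ m
        = (if i.val % 2 = 0 then pX k ⟨i.val/2, by omega⟩ else pY k ⟨i.val/2, by omega⟩)
          * ∑ m, G i m * ψ m := by
          rw [Finset.mul_sum]
          apply Finset.sum_congr rfl
          intro m _
          by_cases h : i.val % 2 = 0 <;> simp [h, pX, pY, mul_assoc]
      _ = _ := by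
          congr 1
          rw [Finset.sum_congr rfl (fun m _ => this m)]
          rw [Finset.sum_sub_distrib, ← Finset.mul_sum, Finset.sum_ite_eq]
          simp
  rw [hrow, hSum]
  set j : Fin d := ⟨i.val/2, by omega⟩ with hj
  have hQ : (1/(d:ℂ)) * ((d:ℂ) * pQ k) = pQ k := by
    field_simp
  rw [hQ, hψ' i, ← pQP k j]
  have hxy := pXY k j
  by_cases h : i.val % 2 = 0
  · simp only [if_pos h]
    linear_combination (1 + pX k j) * pP k j * hxy
  · simp only [if_neg h]
    linear_combination (1 + pY k j) * pP k j * hxy
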